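/- arXiv:1709.10253 — 2 statements merged into one kernel-verified Lean document; each statement's English description precedes it below -/
import Mathlib

section
/- Let m, n be positive integers, let A, B ∈ M_m(GF(2)) and C, D ∈ M_n(GF(2)), where GF(2) = ℤ/2ℤ is the field with two elements. Then det_1((A⊗C)(B⊗D)) = det_1(A⊗C)·det_1(B⊗D). -/
open Matrix Kronecker

/-- The partial determinant `det₁`: for `A ∈ M_{mn}(F) = M_m(F) ⊗ M_n(F)`,
`det1 A` is the `n × n` matrix whose `(i,j)` entry is the determinant of the
block `A_{ij} ∈ M_m(F)` given by `(A_{ij})_{kl} = A (k,i) (l,j)`. -/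
def det1 {F : Type*} [Field F] {m n : ℕ}
    (A : Matrix (Fin m × Fin n) (Fin m × Fin n) F) : Matrix (Fin n) (Fin n) F :=
  Matrix.of fun i j => Matrix.det (Matrix.of fun k l : Fin m => A (k, i) (l, j))

/-- The `m`-th Hadamard (entrywise) power of a matrix. -/
def hpow {F : Type*} [Monoid F] {n : ℕ} (B : Matrix (Fin n) (Fin n) F) (m : ℕ) :
    Matrix (Fin n) (Fin n) F :=
  Matrix.of fun i j => (B i j) ^ m

/-!
The `(i, j)` block of `X ⊗ Y` is `Y i j • X`, whose determinant is `(Y i j) ^ m * det X`, so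
`det₁ (X ⊗ Y) = det X • hpow Y m`. Over `GF(2)` every element satisfies `x ^ m = x` for `m > 0`,
so `det₁ (X ⊗ Y) = det X • Y`, and the claim follows from the mixed-product rule
`(A ⊗ C) (B ⊗ D) = A B ⊗ C D` and the multiplicativity of `det`.
-/

theorem det1_kronecker {F : Type*} [Field F] {m n : ℕ}
    (X : Matrix (Fin m) (Fin m) F) (Y : Matrix (Fin n) (Fin n) F) :
    det1 (X ⊗ₖ Y) = X.det • hpow Y m := by
  ext i j
  have block : (Matrix.of fun k l : Fin m => (X ⊗ₖ Y) (k, i) (l, j)) = Y i j • X := by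
    ext k l
    simp [kroneckerMap_apply, mul_comm]
  rw [det1, of_apply, block, det_smul, Fintype.card_fin, Matrix.smul_apply, hpow, of_apply,
    smul_eq_mul, mul_comm]

theorem hpow_zmod_two_eq_self {m n : ℕ} (hm : m ≠ 0) (Y : Matrix (Fin n) (Fin n) (ZMod 2)) :
    hpow Y m = Y := by
  ext i j
  obtain ⟨k, rfl⟩ := Nat.exists_eq_succ_of_ne_zero hm
  have idem : IsIdempotentElem (Y i j) := by
    unfold IsIdempotentElem
    generalize Y i j = x
    fin_cases x <;> rfl
  exact idem.pow_succ_eq k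

theorem det1_mul_kronecker_gf2_general {m n : ℕ} (hm : 0 < m)
    (A B : Matrix (Fin m) (Fin m) (ZMod 2)) (C D : Matrix (Fin n) (Fin n) (ZMod 2)) :
    det1 ((A ⊗ₖ C) * (B ⊗ₖ D)) = det1 (A ⊗ₖ C) * det1 (B ⊗ₖ D) := by
  rw [← mul_kronecker_mul]
  simp only [det1_kronecker, hpow_zmod_two_eq_self hm.ne', det_mul, smul_mul_smul_comm]

/-- Over `GF(2)`, the partial determinant is always multiplicative on
Kronecker products. -/
theorem det1_mul_kronecker_gf2 {m n : ℕ} (hm : 0 < m) (hn : 0 < n)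
    (A B : Matrix (Fin m) (Fin m) (ZMod 2)) (C D : Matrix (Fin n) (Fin n) (ZMod 2)) :
    det1 ((A ⊗ₖ C) * (B ⊗ₖ D)) = det1 (A ⊗ₖ C) * det1 (B ⊗ₖ D) :=
  det1_mul_kronecker_gf2_general hm A B C D
end

section
/- Let F be a field of characteristic 0, let n be a positive integer and let B, C ∈ M_n(F). Then det_1(A⊗(B+C)) = det_1(A⊗B) + det_1(A⊗C) holds for all positive integers m and all A ∈ M_m(F) if and only if B∘C = 0 (the Hadamard product of B and C is the zero matrix). -/
open Matrix Kronecker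

lemma det1_kron {F : Type*} [Field F] {m n : ℕ} (A : Matrix (Fin m) (Fin m) F)
    (B : Matrix (Fin n) (Fin n) F) (i j : Fin n) :
    det1 (A ⊗ₖ B) i j = B i j ^ m * A.det := by
  unfold det1
  simp only [Matrix.of_apply]
  have h : (Matrix.of fun k l : Fin m => (A ⊗ₖ B) (k, i) (l, j)) = B i j • A := by
    ext k l
    simp [Matrix.kroneckerMap_apply, mul_comm]
  rw [h, Matrix.det_smul]
  simp

lemma add_pow_of_mul_eq_zero {F : Type*} [CommRing F] {a b : F} (h : a * b = 0) :
    ∀ m : ℕ, 0 < m → (a + b) ^ m = a ^ m + b ^ m := by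
  intro m hm
  induction m with
  | zero => omega
  | succ k ih =>
    rcases Nat.eq_zero_or_pos k with hk | hk
    · subst hk; simp
    · have hab : a ^ k * b = 0 := by
        obtain ⟨j, rfl⟩ := Nat.exists_eq_add_of_le hk
        have : a ^ (1 + j) * b = a ^ j * (a * b) := by ring
        rw [this, h, mul_zero]
      have hba : b ^ k * a = 0 := by
        obtain ⟨j, rfl⟩ := Nat.exists_eq_add_of_le hk
        have : b ^ (1 + j) * a = b ^ j * (a * b) := by ring
        rw [this, h, mul_zero]
      have : (a + b) ^ (k + 1) = (a ^ k + b ^ k) * (a + b) := by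
        rw [pow_succ, ih hk]
      rw [this]
      linear_combination hab + hba

/-- Over a field of characteristic zero, the partial determinant is additive on
`A ⊗ (B + C)` for all `m` and all `A ∈ M_m(F)` iff `B ∘ C = 0`. -/
theorem det1_add_iff_hadamard_eq_zero {F : Type*} [Field F] [CharZero F] {n : ℕ}
    (hn : 0 < n) (B C : Matrix (Fin n) (Fin n) F) :
    (∀ m : ℕ, 0 < m → ∀ A : Matrix (Fin m) (Fin m) F,
        det1 (A ⊗ₖ (B + C)) = det1 (A ⊗ₖ B) + det1 (A ⊗ₖ C)) ↔
      Matrix.hadamard B C = 0 := by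
  constructor
  · intro h
    ext i j
    have h2 := h 2 two_pos 1
    have h3 := congrFun (congrFun h2 i) j
    simp only [Matrix.add_apply, det1_kron, Matrix.det_one, mul_one] at h3
    have key : (B i j + C i j) ^ 2 = B i j ^ 2 + C i j ^ 2 := by
      simpa [Matrix.add_apply] using h3
    have h0 : (2 : F) * (B i j * C i j) = 0 := by linear_combination key
    have := (mul_eq_zero.mp h0).resolve_left (two_ne_zero)
    simpa [Matrix.hadamard_apply] using this
  · intro h m hm A
    ext i j
    have hij : B i j * C i j = 0 := by
      have := congrFun (congrFun h i) j
      simpa [Matrix.hadamard_apply] using this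
    simp only [Matrix.add_apply, det1_kron]
    rw [add_pow_of_mul_eq_zero hij m hm, add_mul]
end
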